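/- Define, for z > 0, Ai(z) = (z^{1/2}/3) · ( I_{−1/3}((2/3)z^{3/2}) − I_{1/3}((2/3)z^{3/2}) ). Then Ai(z) tends to 3^{−2/3} / Γ(2/3) as z → 0⁺. -/

import Mathlib

/-!
Writing `I_ν(t) = (t/2)^ν F_ν((t/2)²)` with the entire series `F_ν(x) = ∑ xʳ / (r! Γ(ν+r+1))`,
the substitution `t = (2/3) z^{3/2}` gives
`(z^{1/2}/3) I_ν(t) = 3^{-ν-1} z^{(3ν+1)/2} F_ν(z³/9)`.
For `ν = -1/3` the power of `z` is `z⁰`, for `ν = 1/3` it is `z¹`, and `F_ν` is continuous at `0`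
with value `1/Γ(ν+1)` by dominated convergence, using `Γ(ν+r+1) ≥ Γ(ν+1)(ν+1)ʳ`.
-/

open Real Filter Topology
open scoped Nat

noncomputable def besselI (ν t : ℝ) : ℝ :=
  ∑' r : ℕ, t ^ (ν + 2 * (r : ℝ)) /
    ((2 : ℝ) ^ (ν + 2 * (r : ℝ)) * (Nat.factorial r : ℝ) * Real.Gamma (ν + (r : ℝ) + 1))

noncomputable def besselISeries (ν x : ℝ) : ℝ :=
  ∑' r : ℕ, x ^ r / (r ! * Gamma (ν + r + 1))

lemma Gamma_add_one_mul_pow_le_Gamma_add_nat {ν : ℝ} (hν : -1 < ν) (r : ℕ) :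
    Gamma (ν + 1) * (ν + 1) ^ r ≤ Gamma (ν + r + 1) := by
  induction r with
  | zero => simp
  | succ r ih =>
    have hν1 : 0 < ν + 1 := by linarith
    have hνr : 0 < ν + r + 1 := by linarith [(r.cast_nonneg : (0 : ℝ) ≤ r)]
    calc Gamma (ν + 1) * (ν + 1) ^ (r + 1) = (ν + 1) * (Gamma (ν + 1) * (ν + 1) ^ r) := by ring
      _ ≤ (ν + r + 1) * Gamma (ν + r + 1) :=
        mul_le_mul (by linarith) ih
          (mul_nonneg (Gamma_pos_of_pos hν1).le (pow_nonneg hν1.le r)) hνr.le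
      _ = Gamma (ν + ↑(r + 1) + 1) := by
        rw [← Gamma_add_one hνr.ne']; push_cast; ring_nf

lemma tendsto_besselISeries_zero {ν : ℝ} (hν : -1 < ν) :
    Tendsto (besselISeries ν) (𝓝 0) (𝓝 (Gamma (ν + 1))⁻¹) := by
  have hν1 : 0 < ν + 1 := by linarith
  have hsum : ∑' r : ℕ, (0 : ℝ) ^ r / (r ! * Gamma (ν + r + 1)) = (Gamma (ν + 1))⁻¹ := by
    rw [tsum_eq_single 0 fun r hr => by simp [zero_pow hr]]
    simp
  rw [← hsum]
  refine tendsto_tsum_of_dominated_convergence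
    (bound := fun r => (Gamma (ν + 1))⁻¹ * ((ν + 1)⁻¹ ^ r / r !))
    ((Real.summable_pow_div_factorial _).mul_left _)
    (fun r => ((continuous_pow r).tendsto 0).div_const _) ?_
  filter_upwards [Metric.closedBall_mem_nhds (0 : ℝ) one_pos] with x hx r
  have hΓr : 0 < Gamma (ν + r + 1) := Gamma_pos_of_pos (by linarith [(r.cast_nonneg : (0 : ℝ) ≤ r)])
  rw [norm_div, norm_pow, Real.norm_eq_abs, Real.norm_of_nonneg (by positivity)]
  calc |x| ^ r / (r ! * Gamma (ν + r + 1))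
      ≤ 1 / (r ! * (Gamma (ν + 1) * (ν + 1) ^ r)) := by
        gcongr
        · exact pow_le_one₀ (abs_nonneg x) (by simpa using hx)
        · exact Gamma_add_one_mul_pow_le_Gamma_add_nat hν r
    _ = (Gamma (ν + 1))⁻¹ * ((ν + 1)⁻¹ ^ r / r !) := by
        rw [inv_pow]; field_simp

lemma besselI_eq_rpow_mul_besselISeries (ν : ℝ) {t : ℝ} (ht : 0 < t) :
    besselI ν t = (t / 2) ^ ν * besselISeries ν ((t / 2) ^ 2) := by
  rw [besselI, besselISeries, ← tsum_mul_left]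
  refine tsum_congr fun r => ?_
  rw [mul_assoc, ← div_div, ← div_rpow ht.le zero_le_two, rpow_add (by positivity),
    rpow_mul (by positivity)]
  norm_cast
  ring

lemma rpow_half_mul_besselI_eq {ν z : ℝ} (hz : 0 < z) :
    z ^ ((1 : ℝ) / 2) / 3 * besselI ν (2 / 3 * z ^ ((3 : ℝ) / 2)) =
      3 ^ (-ν - 1) * z ^ ((3 * ν + 1) / 2) * besselISeries ν (z ^ 3 / 9) := by
  have h32 : 2 / 3 * z ^ ((3 : ℝ) / 2) / 2 = z ^ ((3 : ℝ) / 2) / 3 := by ring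
  have hsq : (z ^ ((3 : ℝ) / 2) / 3) ^ 2 = z ^ 3 / 9 := by
    rw [div_pow, ← rpow_natCast, ← rpow_mul hz.le]; norm_num
  rw [besselI_eq_rpow_mul_besselISeries ν (by positivity), h32, hsq,
    div_rpow (by positivity) (by norm_num), ← rpow_mul hz.le, rpow_sub_one (by norm_num),
    rpow_neg (by norm_num), show (3 * ν + 1) / 2 = 1 / 2 + 3 / 2 * ν by ring, rpow_add hz]
  field_simp

lemma tendsto_rpow_half_mul_besselI_zero {ν : ℝ} (hν : -1 / 3 ≤ ν) :
    Tendsto (fun z : ℝ => z ^ ((1 : ℝ) / 2) / 3 * besselI ν (2 / 3 * z ^ ((3 : ℝ) / 2)))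
      (𝓝[>] 0) (𝓝 (3 ^ (-ν - 1) * 0 ^ ((3 * ν + 1) / 2) * (Gamma (ν + 1))⁻¹)) := by
  have hpow : Tendsto (fun z : ℝ => z ^ ((3 * ν + 1) / 2)) (𝓝 0) (𝓝 (0 ^ ((3 * ν + 1) / 2))) :=
    (continuousAt_rpow_const 0 _ (Or.inr (by linarith))).tendsto
  have hcube : Tendsto (fun z : ℝ => z ^ 3 / 9) (𝓝 0) (𝓝 0) := by
    simpa using ((continuous_pow 3).div_const (9 : ℝ)).tendsto 0
  have hseries := (tendsto_besselISeries_zero (by linarith : -1 < ν)).comp hcube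
  refine (((hpow.const_mul _).mul hseries).mono_left nhdsWithin_le_nhds).congr' ?_
  filter_upwards [self_mem_nhdsWithin] with z hz
  exact (rpow_half_mul_besselI_eq hz).symm

/-- `Ai(z) = (z^{1/2}/3)(I_{-1/3}((2/3)z^{3/2}) - I_{1/3}((2/3)z^{3/2}))` tends to
`3^{-2/3}/Γ(2/3)` as `z → 0⁺`. -/
theorem tendsto_Airy_Ai_zero :
    Filter.Tendsto
      (fun z : ℝ => z ^ ((1 : ℝ) / 2) / 3 *
        (besselI (-(1 / 3)) (2 / 3 * z ^ ((3 : ℝ) / 2)) -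
          besselI (1 / 3) (2 / 3 * z ^ ((3 : ℝ) / 2))))
      (nhdsWithin 0 (Set.Ioi 0))
      (nhds ((3 : ℝ) ^ (-(2 : ℝ) / 3) / Real.Gamma (2 / 3))) := by
  have hminus := tendsto_rpow_half_mul_besselI_zero (ν := -(1 / 3)) (by norm_num)
  have hplus := tendsto_rpow_half_mul_besselI_zero (ν := 1 / 3) (by norm_num)
  convert hminus.sub hplus using 2
  · simp_rw [mul_sub]
  · norm_num [div_eq_mul_inv]
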